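/- Let κ > 0 and γ ∈ ℝ, and set p = (2 + κ/2)γ − (κ/2)γ², q = 2p − (1 + κ/2)γ, and β = (κ/2)γ². Then the function G(z₁, z₂) = (1 − z₁)^γ (1 − z₂)^γ (1 − z₁z₂)^{−β}, defined on 𝔻 × 𝔻 using principal branch powers, satisfies 𝒫(D)[G] = 0 at every point of 𝔻 × 𝔻. -/

import Mathlib

/-- The operator `L = z₁∂₁ − z₂∂₂` acting on functions of two complex variables. -/
noncomputable def opL (G : ℂ → ℂ → ℂ) : ℂ → ℂ → ℂ :=
  fun z₁ z₂ => z₁ * deriv (fun w => G w z₂) z₁ - z₂ * deriv (fun w => G z₁ w) z₂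

/-- The two-variable Beliaev–Smirnov type operator `𝒫(D)` with parameters `κ, p, q`:
`𝒫(D)[G] = −(κ/2) L(L G) − ((1+z₁)/(1−z₁)) z₁∂₁G − ((1+z₂)/(1−z₂)) z₂∂₂G
  + (−p/(1−z₁)² − p/(1−z₂)² + q/(1−z₁) + q/(1−z₂) + 2p − 2q) G`. -/
noncomputable def PD (κ p q : ℝ) (G : ℂ → ℂ → ℂ) (z₁ z₂ : ℂ) : ℂ :=
  -(κ / 2 : ℂ) * opL (opL G) z₁ z₂
    - ((1 + z₁) / (1 - z₁)) * (z₁ * deriv (fun w => G w z₂) z₁)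
    - ((1 + z₂) / (1 - z₂)) * (z₂ * deriv (fun w => G z₁ w) z₂)
    + (-(p : ℂ) / (1 - z₁) ^ 2 - (p : ℂ) / (1 - z₂) ^ 2
        + (q : ℂ) / (1 - z₁) + (q : ℂ) / (1 - z₂) + 2 * (p : ℂ) - 2 * (q : ℂ)) * G z₁ z₂


/-!
Write `a = 1 - z₁`, `b = 1 - z₂`, `c = 1 - z₁z₂`. The closed form `G` has logarithmic partial
derivatives `∂₁ log G = -γ/a + βz₂/c` and `∂₂ log G = -γ/b + βz₁/c`, so in `L log G` the `β`-terms
cancel and `L G = V G` with `V = γ (z₂/(1-z₂) - z₁/(1-z₁))`. As `L` is a derivation,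
`L (L G) = (L V + V²) G`, and `𝒫(D)[G] / G` is a rational function of `z₁, z₂`. Its only `1/c`
terms, coming from `z₁∂₁G` and `z₂∂₂G`, add up to `-2βz₁z₂/(ab)`, which cancels the cross term of
`-(κ/2) V²` because `β = κγ²/2`; the remaining terms vanish identically on the parabola.
-/

open Complex Filter Topology

section opL

variable {f g : ℂ → ℂ → ℂ} {z₁ z₂ : ℂ}

theorem opL_eq_of_hasDerivAt {d₁ d₂ : ℂ} (h₁ : HasDerivAt (fun w => f w z₂) d₁ z₁)
    (h₂ : HasDerivAt (fun w => f z₁ w) d₂ z₂) : opL f z₁ z₂ = z₁ * d₁ - z₂ * d₂ := by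
  rw [opL, h₁.deriv, h₂.deriv]

theorem opL_congr {s t : Set ℂ} (hs : IsOpen s) (ht : IsOpen t) (hz₁ : z₁ ∈ s) (hz₂ : z₂ ∈ t)
    (h : ∀ w₁ ∈ s, ∀ w₂ ∈ t, f w₁ w₂ = g w₁ w₂) : opL f z₁ z₂ = opL g z₁ z₂ := by
  have e₁ : (fun w => f w z₂) =ᶠ[𝓝 z₁] fun w => g w z₂ :=
    eventually_of_mem (hs.mem_nhds hz₁) fun w hw => h w hw z₂ hz₂
  have e₂ : (fun w => f z₁ w) =ᶠ[𝓝 z₂] fun w => g z₁ w :=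
    eventually_of_mem (ht.mem_nhds hz₂) fun w hw => h z₁ hz₁ w hw
  simp only [opL, e₁.deriv_eq, e₂.deriv_eq]

theorem opL_mul (hf₁ : DifferentiableAt ℂ (fun w => f w z₂) z₁)
    (hf₂ : DifferentiableAt ℂ (fun w => f z₁ w) z₂)
    (hg₁ : DifferentiableAt ℂ (fun w => g w z₂) z₁)
    (hg₂ : DifferentiableAt ℂ (fun w => g z₁ w) z₂) :
    opL (f * g) z₁ z₂ = opL f z₁ z₂ * g z₁ z₂ + f z₁ z₂ * opL g z₁ z₂ := by
  rw [opL_eq_of_hasDerivAt (f := f * g) (hf₁.hasDerivAt.mul hg₁.hasDerivAt)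
    (hf₂.hasDerivAt.mul hg₂.hasDerivAt), opL, opL]
  ring

end opL

theorem one_sub_mem_slitPlane {z : ℂ} (hz : z ∈ Metric.ball (0 : ℂ) 1) : 1 - z ∈ slitPlane :=
  ball_one_subset_slitPlane (by simpa using hz)

theorem mul_mem_ball_zero_one {z₁ z₂ : ℂ} (hz₁ : z₁ ∈ Metric.ball (0 : ℂ) 1)
    (hz₂ : z₂ ∈ Metric.ball (0 : ℂ) 1) : z₁ * z₂ ∈ Metric.ball (0 : ℂ) 1 := by
  rw [mem_ball_zero_iff] at *
  rw [norm_mul]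
  exact mul_lt_one_of_nonneg_of_lt_one_left (norm_nonneg _) hz₁ hz₂.le

theorem hasDerivAt_div_one_sub {z : ℂ} (hz : 1 - z ≠ 0) :
    HasDerivAt (fun w => w / (1 - w)) (1 / (1 - z) ^ 2) z := by
  refine ((hasDerivAt_id' z).div ((hasDerivAt_id' z).const_sub 1) hz).congr_deriv ?_
  field_simp
  ring

noncomputable def closedForm (γ β : ℝ) (w₁ w₂ : ℂ) : ℂ :=
  (1 - w₁) ^ (γ : ℂ) * (1 - w₂) ^ (γ : ℂ) * (1 - w₁ * w₂) ^ (-(β : ℂ))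

noncomputable def logOpLClosedForm (γ : ℝ) (w₁ w₂ : ℂ) : ℂ :=
  γ * (w₂ / (1 - w₂) - w₁ / (1 - w₁))

section closedForm

variable {γ β : ℝ} {z₁ z₂ : ℂ}

theorem closedForm_comm (w₁ w₂ : ℂ) : closedForm γ β w₁ w₂ = closedForm γ β w₂ w₁ := by
  rw [closedForm, closedForm, mul_comm w₁ w₂]
  ring

theorem hasDerivAt_closedForm_fst (h₁ : 1 - z₁ ∈ slitPlane) (h₁₂ : 1 - z₁ * z₂ ∈ slitPlane) :
    HasDerivAt (fun w => closedForm γ β w z₂)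
      ((-γ / (1 - z₁) + β * z₂ / (1 - z₁ * z₂)) * closedForm γ β z₁ z₂) z₁ := by
  have d₁ : HasDerivAt (fun w : ℂ => 1 - w) (-1) z₁ := by
    simpa using (hasDerivAt_id z₁).const_sub 1
  have d₁₂ : HasDerivAt (fun w : ℂ => 1 - w * z₂) (-z₂) z₁ := by
    simpa using ((hasDerivAt_id z₁).mul_const z₂).const_sub 1
  refine (((d₁.cpow_const h₁).mul_const ((1 - z₂) ^ (γ : ℂ))).mul
    (d₁₂.cpow_const h₁₂)).congr_deriv ?_
  rw [cpow_sub _ _ (slitPlane_ne_zero h₁), cpow_sub _ _ (slitPlane_ne_zero h₁₂), cpow_one,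
    cpow_one, closedForm]
  field_simp [slitPlane_ne_zero h₁, slitPlane_ne_zero h₁₂]

theorem hasDerivAt_closedForm_snd (h₂ : 1 - z₂ ∈ slitPlane) (h₁₂ : 1 - z₁ * z₂ ∈ slitPlane) :
    HasDerivAt (fun w => closedForm γ β z₁ w)
      ((-γ / (1 - z₂) + β * z₁ / (1 - z₁ * z₂)) * closedForm γ β z₁ z₂) z₂ := by
  rw [mul_comm z₁ z₂] at h₁₂ ⊢
  simpa only [closedForm_comm z₁] using hasDerivAt_closedForm_fst (β := β) h₂ h₁₂

theorem opL_closedForm (h₁ : 1 - z₁ ∈ slitPlane) (h₂ : 1 - z₂ ∈ slitPlane)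
    (h₁₂ : 1 - z₁ * z₂ ∈ slitPlane) :
    opL (closedForm γ β) z₁ z₂ = logOpLClosedForm γ z₁ z₂ * closedForm γ β z₁ z₂ := by
  rw [opL_eq_of_hasDerivAt (hasDerivAt_closedForm_fst h₁ h₁₂)
    (hasDerivAt_closedForm_snd h₂ h₁₂), logOpLClosedForm]
  field_simp [slitPlane_ne_zero h₁, slitPlane_ne_zero h₂, slitPlane_ne_zero h₁₂]
  ring

theorem opL_logOpLClosedForm (h₁ : 1 - z₁ ≠ 0) (h₂ : 1 - z₂ ≠ 0) :
    opL (logOpLClosedForm γ) z₁ z₂ = -γ * (z₁ / (1 - z₁) ^ 2 + z₂ / (1 - z₂) ^ 2) := by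
  rw [opL_eq_of_hasDerivAt (((hasDerivAt_div_one_sub h₁).const_sub _).const_mul _)
    (((hasDerivAt_div_one_sub h₂).sub_const _).const_mul _)]
  ring

theorem opL_opL_closedForm (hz₁ : z₁ ∈ Metric.ball (0 : ℂ) 1) (hz₂ : z₂ ∈ Metric.ball (0 : ℂ) 1) :
    opL (opL (closedForm γ β)) z₁ z₂ =
      (opL (logOpLClosedForm γ) z₁ z₂ + logOpLClosedForm γ z₁ z₂ ^ 2) * closedForm γ β z₁ z₂ := by
  have h₁ := one_sub_mem_slitPlane hz₁
  have h₂ := one_sub_mem_slitPlane hz₂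
  have h₁₂ := one_sub_mem_slitPlane (mul_mem_ball_zero_one hz₁ hz₂)
  have hV₁ : DifferentiableAt ℂ (fun w => logOpLClosedForm γ w z₂) z₁ :=
    (((hasDerivAt_div_one_sub (slitPlane_ne_zero h₁)).const_sub _).const_mul _).differentiableAt
  have hV₂ : DifferentiableAt ℂ (fun w => logOpLClosedForm γ z₁ w) z₂ :=
    (((hasDerivAt_div_one_sub (slitPlane_ne_zero h₂)).sub_const _).const_mul _).differentiableAt
  rw [opL_congr (g := logOpLClosedForm γ * closedForm γ β) Metric.isOpen_ball Metric.isOpen_ball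
      hz₁ hz₂ fun w₁ hw₁ w₂ hw₂ => opL_closedForm (one_sub_mem_slitPlane hw₁)
        (one_sub_mem_slitPlane hw₂) (one_sub_mem_slitPlane (mul_mem_ball_zero_one hw₁ hw₂)),
    opL_mul hV₁ hV₂ (hasDerivAt_closedForm_fst h₁ h₁₂).differentiableAt
      (hasDerivAt_closedForm_snd h₂ h₁₂).differentiableAt, opL_closedForm h₁ h₂ h₁₂]
  ring

end closedForm

theorem PD_closed_form_solution_on_parabola (κ γ : ℝ) (p q β : ℝ)
    (hp : p = (2 + κ / 2) * γ - (κ / 2) * γ ^ 2)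
    (hq : q = 2 * p - (1 + κ / 2) * γ)
    (hβ : β = (κ / 2) * γ ^ 2) :
    ∀ z₁ ∈ Metric.ball (0:ℂ) 1, ∀ z₂ ∈ Metric.ball (0:ℂ) 1,
      PD κ p q
        (fun w₁ w₂ => (1 - w₁) ^ (γ : ℂ) * (1 - w₂) ^ (γ : ℂ) * (1 - w₁ * w₂) ^ (-(β : ℂ)))
        z₁ z₂ = 0 := by
  intro z₁ hz₁ z₂ hz₂
  have h₁ := one_sub_mem_slitPlane hz₁
  have h₂ := one_sub_mem_slitPlane hz₂
  have h₁₂ := one_sub_mem_slitPlane (mul_mem_ball_zero_one hz₁ hz₂)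
  change PD κ p q (closedForm γ β) z₁ z₂ = 0
  rw [PD, opL_opL_closedForm hz₁ hz₂,
    opL_logOpLClosedForm (slitPlane_ne_zero h₁) (slitPlane_ne_zero h₂),
    (hasDerivAt_closedForm_fst h₁ h₁₂).deriv, (hasDerivAt_closedForm_snd h₂ h₁₂).deriv]
  subst hq hp hβ
  simp only [logOpLClosedForm]
  push_cast
  field_simp [slitPlane_ne_zero h₁, slitPlane_ne_zero h₂, slitPlane_ne_zero h₁₂]
  ring
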